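/- arXiv:2412.08835 — 3 statements merged into one kernel-verified Lean document; each statement's English description precedes it below -/
import Mathlib

section
/- The operation (M,S) • (N,T) = (M ⊕ N, S ⋆ T), where S ⋆ T = S ∪ T ∪ {composites p·q : p ∈ S, q ∈ T composable}, is associative, making the set of pairs (multigraph, set of paths) a monoid with the empty graph (with empty path set) as identity. -/
namespace GGNN

variable {V : Type*} (G : SimpleGraph V)

/-- A directed edge of the graph `G`: an ordered pair of adjacent vertices. -/
abbrev DEdge := {p : V × V // G.Adj p.1 p.2}

/-- Two (nonempty) paths are composable when the endpoint of the first is the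
start point of the second. -/
def Composable (p q : List (DEdge G)) : Prop :=
  ∃ d e, p.getLast? = some d ∧ q.head? = some e ∧ d.1.2 = e.1.1

/-- Elements of `SMult(G)`: pairs `(M, S)` of a directed multigraph `M`
(a multiset of directed edges of `G`) and a set `S` of paths. -/
abbrev SMult := Multiset (DEdge G) × Set (List (DEdge G))

/-- `S ⋆ T`: the union of `S`, `T`, and all composites of a path of `S`
followed by a composable path of `T`. -/
def star (S T : Set (List (DEdge G))) : Set (List (DEdge G)) :=
  S ∪ T ∪ {r | ∃ p ∈ S, ∃ q ∈ T, Composable G p q ∧ r = p ++ q}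

/-- The operation `(M,S) • (N,T) = (M ⊕ N, S ⋆ T)` on `SMult(G)`, where
`M ⊕ N` is the (disjoint) union of the edge multisets. -/
def smul (x y : SMult G) : SMult G :=
  (x.1 + y.1, star G x.2 y.2)

/-- The identity element: the empty graph with the empty set of paths. -/
def sone : SMult G := (0, ∅)

lemma comp_left_ne {p q : List (DEdge G)} (h : Composable G p q) : p ≠ [] := by
  obtain ⟨d, e, h1, -, -⟩ := h
  intro hp; simp [hp] at h1

lemma comp_right_ne {p q : List (DEdge G)} (h : Composable G p q) : q ≠ [] := by
  obtain ⟨d, e, -, h2, -⟩ := h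
  intro hq; simp [hq] at h2

lemma comp_append_right {p q r : List (DEdge G)} (hq : q ≠ []) :
    Composable G p (q ++ r) ↔ Composable G p q := by
  unfold Composable
  cases q with
  | nil => exact absurd rfl hq
  | cons a l => simp

lemma comp_append_left {p q r : List (DEdge G)} (hq : q ≠ []) :
    Composable G (p ++ q) r ↔ Composable G q r := by
  unfold Composable
  rw [List.getLast?_append_of_ne_nil _ hq]

lemma star_assoc (S T U : Set (List (DEdge G))) :
    star G (star G S T) U = star G S (star G T U) := by
  ext x
  simp only [star, Set.mem_union, Set.mem_setOf_eq]
  constructor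
  · rintro ((((h | h) | ⟨p, hp, q, hq, hc, rfl⟩) | h) |
      ⟨p, ((hp | hp) | ⟨a, ha, b, hb, hab, rfl⟩), q, hq, hc, rfl⟩)
    · exact Or.inl (Or.inl h)
    · exact Or.inl (Or.inr (Or.inl (Or.inl h)))
    · exact Or.inr ⟨p, hp, q, Or.inl (Or.inl hq), hc, rfl⟩
    · exact Or.inl (Or.inr (Or.inl (Or.inr h)))
    · exact Or.inr ⟨p, hp, q, Or.inl (Or.inr hq), hc, rfl⟩
    · exact Or.inl (Or.inr (Or.inr ⟨p, hp, q, hq, hc, rfl⟩))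
    · have hb' : b ≠ [] := comp_right_ne G hab
      have hbq : Composable G b q := (comp_append_left G hb').mp hc
      exact Or.inr ⟨a, ha, b ++ q, Or.inr ⟨b, hb, q, hq, hbq, rfl⟩,
        (comp_append_right G hb').mpr hab, by rw [List.append_assoc]⟩
  · rintro (((h | ((h | h) | ⟨p, hp, q, hq, hc, rfl⟩)) |
      ⟨p, hp, q, ((hq | hq) | ⟨a, ha, b, hb, hab, rfl⟩), hc, rfl⟩))
    · exact Or.inl (Or.inl (Or.inl (Or.inl h)))
    · exact Or.inl (Or.inl (Or.inl (Or.inr h)))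
    · exact Or.inl (Or.inr h)
    · exact Or.inr ⟨p, Or.inl (Or.inr hp), q, hq, hc, rfl⟩
    · exact Or.inl (Or.inl (Or.inr ⟨p, hp, q, hq, hc, rfl⟩))
    · exact Or.inr ⟨p, Or.inl (Or.inl hp), q, hq, hc, rfl⟩
    · have ha' : a ≠ [] := comp_left_ne G hab
      have hpa : Composable G p a := (comp_append_right G ha').mp hc
      exact Or.inr ⟨p ++ a, Or.inr ⟨p, hp, a, ha, hpa, rfl⟩, b, hb,
        (comp_append_left G ha').mpr hab, by rw [List.append_assoc]⟩

/-- The operation `(M,S) • (N,T) = (M ⊕ N, S ⋆ T)` is associative, making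
`SMult(G)` a monoid whose identity is the empty graph with the empty path
set. -/
theorem smult_monoid :
    (∀ x y z : SMult G, smul G (smul G x y) z = smul G x (smul G y z)) ∧
    (∀ x : SMult G, smul G (sone G) x = x) ∧
    (∀ x : SMult G, smul G x (sone G) = x) := by
  refine ⟨fun x y z => ?_, fun x => ?_, fun x => ?_⟩
  · simp [smul, add_assoc, star_assoc]
  · simp [smul, sone, star]
  · simp [smul, sone, star]

end GGNN
end

section
/- If a permutation-induced Change-of-Order mapping f : Mat_n(ℝ) → Mat_n(ℝ) restricts to a monoid isomorphism from Adj(G) onto Adj(H), where Adj(·) is the submonoid generated by the single-column neighborhood matrices, then the graphs G and H are isomorphic. -/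
open Matrix

namespace GGNN

open scoped Classical

variable {V : Type*} (G : SimpleGraph V)

/-- The operation `A ∘ B = A + B + A·B` on matrices. -/
def op [Fintype V] (A B : Matrix V V ℝ) : Matrix V V ℝ := A + B + A * B

/-- The single-column neighborhood matrix of a node `v`: its `v`-th column is
the `v`-th column of the adjacency matrix of `G` and all other columns are
zero. -/
noncomputable def Adjv [Fintype V] (v : V) : Matrix V V ℝ :=
  Matrix.of fun i j => if j = v ∧ G.Adj i j then 1 else 0

/-- The submonoid-as-a-set generated by `A` under the binary operation `o`
with identity `e`: all finite `o`-products of elements of `A`. -/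
def GenBy {α : Type*} (A : Set α) (o : α → α → α) (e : α) : Set α :=
  {x | ∃ l : List α, (∀ a ∈ l, a ∈ A) ∧ l.foldr o e = x}

/-- `Adj(G)`: the submonoid of `(Mat_n(ℝ), ∘)` generated by the single-column
neighborhood matrices of `G`. -/
noncomputable def AdjMon [Fintype V] : Set (Matrix V V ℝ) :=
  GenBy (Set.range (Adjv G)) op 0

/-- The permutation matrix of a permutation `σ` of the vertices. -/
def permMat [DecidableEq V] (σ : Equiv.Perm V) : Matrix V V ℝ :=
  Matrix.of fun i j => if i = σ j then 1 else 0

/-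
Conjugation by the permutation matrix of `σ` relabels matrix entries by `σ`, so it carries the
monoid `Adj(G)` onto `Adj(G')` for the relabelled graph `G'`. The monoid determines the graph:
if `Adj(G) ⊆ Adj(H)`, the generator `Adjv G j`, supported in column `j`, is a `∘`-product of
generators of `H`. All entries of such products are nonnegative, so nothing cancels, and a
product supported in a single column can only have positive entries along edges of `H`.
-/

namespace GenBy

variable {α β : Type*} {A : Set α} {o : α → α → α} {e : α}

lemma e_mem : e ∈ GenBy A o e := ⟨[], by simp, rfl⟩

lemma op_mem {a x : α} (ha : a ∈ A) (hx : x ∈ GenBy A o e) : o a x ∈ GenBy A o e := by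
  obtain ⟨l, hl, rfl⟩ := hx
  exact ⟨a :: l, by simpa [ha] using hl, rfl⟩

@[elab_as_elim]
lemma induction {P : (x : α) → x ∈ GenBy A o e → Prop} (base : P e e_mem)
    (step : ∀ a (ha : a ∈ A) x (hx : x ∈ GenBy A o e), P x hx → P (o a x) (op_mem ha hx))
    {x : α} (hx : x ∈ GenBy A o e) : P x hx := by
  obtain ⟨l, hl, rfl⟩ := hx
  induction l with
  | nil => exact base
  | cons a l ih =>
    have hl' : ∀ b ∈ l, b ∈ A := fun b hb => hl b (List.mem_cons_of_mem _ hb)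
    exact step a (hl a List.mem_cons_self) _ ⟨l, hl', rfl⟩ (ih hl')

lemma image_eq {o' : β → β → β} {e' : β} (f : α → β) (hf : ∀ a b, f (o a b) = o' (f a) (f b))
    (he : f e = e') : f '' GenBy A o e = GenBy (f '' A) o' e' := by
  apply subset_antisymm
  · rintro _ ⟨x, hx, rfl⟩
    induction hx using induction with
    | base => exact he ▸ e_mem
    | step a ha x _ ih => exact hf a x ▸ op_mem ⟨a, ha, rfl⟩ ih
  · intro y hy
    induction hy using induction with
    | base => exact ⟨e, e_mem, he⟩
    | step _ ha _ _ ih =>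
      obtain ⟨a, ha, rfl⟩ := ha
      obtain ⟨x, hx, rfl⟩ := ih
      exact ⟨o a x, op_mem ha hx, hf a x⟩

end GenBy

section

variable {W : Type*} [Fintype V] {G}

lemma op_apply (A B : Matrix V V ℝ) (i j : V) : op A B i j = A i j + B i j + (A * B) i j := rfl

section Nonneg

variable {A B : Matrix V V ℝ}

lemma mul_apply_nonneg (hA : ∀ i j, 0 ≤ A i j) (hB : ∀ i j, 0 ≤ B i j) (i j : V) :
    0 ≤ (A * B) i j :=
  Finset.sum_nonneg fun k _ => mul_nonneg (hA i k) (hB k j)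

lemma le_op_left (hA : ∀ i j, 0 ≤ A i j) (hB : ∀ i j, 0 ≤ B i j) (i j : V) :
    A i j ≤ op A B i j := by
  have := hB i j; have := mul_apply_nonneg hA hB i j; rw [op_apply]; linarith

lemma le_op_right (hA : ∀ i j, 0 ≤ A i j) (hB : ∀ i j, 0 ≤ B i j) (i j : V) :
    B i j ≤ op A B i j := by
  have := hA i j; have := mul_apply_nonneg hA hB i j; rw [op_apply]; linarith

end Nonneg

lemma adjv_apply (v i j : V) : Adjv G v i j = if j = v ∧ G.Adj i j then 1 else 0 := rfl

lemma adjv_pos_iff {v i j : V} : 0 < Adjv G v i j ↔ j = v ∧ G.Adj i j := by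
  rw [adjv_apply]
  split_ifs with h
  · exact iff_of_true one_pos h
  · exact iff_of_false (lt_irrefl 0) h

lemma adjv_nonneg (v i j : V) : 0 ≤ Adjv G v i j := by
  rw [adjv_apply]; split_ifs <;> norm_num

lemma adjv_mem_adjMon (v : V) : Adjv G v ∈ AdjMon G := by
  have h := GenBy.op_mem (o := op) (Set.mem_range_self (f := Adjv G) v) (GenBy.e_mem (e := 0))
  rwa [op, add_zero, mul_zero, add_zero] at h

lemma nonneg_of_mem_adjMon {A : Matrix V V ℝ} (hA : A ∈ AdjMon G) (i j : V) : 0 ≤ A i j := by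
  induction hA using GenBy.induction generalizing i j with
  | base => rfl
  | step _ ha B _ ih =>
    obtain ⟨v, rfl⟩ := ha
    exact (adjv_nonneg v i j).trans (le_op_left (adjv_nonneg v) ih i j)

/-- A positive entry `(i, j)` of a product of generators records a walk from `i` to `j` in `G`;
unless that walk is a single edge, it also makes an entry outside column `j` positive. -/
lemma adj_or_pos_off_column_of_mem_adjMon {A : Matrix V V ℝ} (hA : A ∈ AdjMon G) {i j : V}
    (hij : 0 < A i j) : G.Adj i j ∨ ∃ i' k, k ≠ j ∧ 0 < A i' k := by
  induction hA using GenBy.induction generalizing i with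
  | base => exact absurd hij (lt_irrefl 0)
  | step _ ha B hB ih =>
    obtain ⟨v, rfl⟩ := ha
    have hB₀ := nonneg_of_mem_adjMon hB
    have lift : (∃ i' k, k ≠ j ∧ 0 < B i' k) → ∃ i' k, k ≠ j ∧ 0 < op (Adjv G v) B i' k :=
      fun ⟨i', k, hk, hpos⟩ => ⟨i', k, hk, hpos.trans_le (le_op_right (adjv_nonneg v) hB₀ i' k)⟩
    have hterm : 0 < Adjv G v i j ∨ 0 < B i j ∨ ∃ k, 0 < Adjv G v i k * B k j := by
      by_contra! hneg
      obtain ⟨h₁, h₂, h₃⟩ := hneg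
      have := Finset.sum_nonpos fun k (_ : k ∈ Finset.univ) => h₃ k
      rw [op_apply, Matrix.mul_apply] at hij
      linarith
    rcases hterm with hA | hB | ⟨k, hk⟩
    · exact Or.inl (adjv_pos_iff.mp hA).2
    · exact (ih hB).imp_right lift
    · obtain ⟨rfl, hik⟩ := adjv_pos_iff.mp (pos_of_mul_pos_left hk (hB₀ k j))
      by_cases hkj : k = j
      · subst hkj
        exact (ih (pos_of_mul_pos_right hk (adjv_nonneg k i k))).elim
          (fun hkk => (G.irrefl hkk).elim) (Or.inr ∘ lift)
      · exact Or.inr ⟨i, k, hkj,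
          (adjv_pos_iff.mpr ⟨rfl, hik⟩).trans_le (le_op_left (adjv_nonneg k) hB₀ i k)⟩

lemma le_of_adjMon_subset {H : SimpleGraph V} (hGH : AdjMon G ⊆ AdjMon H) : G ≤ H := by
  intro i j hij
  refine (adj_or_pos_off_column_of_mem_adjMon (hGH (adjv_mem_adjMon j))
    (adjv_pos_iff.mpr ⟨rfl, hij⟩)).resolve_right ?_
  rintro ⟨i', k, hkj, hpos⟩
  exact hkj (adjv_pos_iff.mp hpos).1

lemma eq_of_adjMon_eq {H : SimpleGraph V} (hGH : AdjMon G = AdjMon H) : G = H :=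
  le_antisymm (le_of_adjMon_subset hGH.le) (le_of_adjMon_subset hGH.ge)

lemma permMat_mul_mul_transpose [DecidableEq V] (σ : Equiv.Perm V) (A : Matrix V V ℝ) :
    permMat σ * A * (permMat σ)ᵀ = A.submatrix σ.symm σ.symm := by
  ext i j
  simp only [permMat, Matrix.mul_apply, Matrix.of_apply, Matrix.transpose_apply,
    Matrix.submatrix_apply, ← Equiv.symm_apply_eq, ite_mul, mul_ite, one_mul, zero_mul, mul_one,
    mul_zero, Finset.sum_ite_eq, Finset.mem_univ, if_true]

lemma op_submatrix [Fintype W] (e : W ≃ V) (A B : Matrix V V ℝ) :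
    op (A.submatrix e e) (B.submatrix e e) = (op A B).submatrix e e := by
  simp [op, Matrix.submatrix_add]

lemma adjv_submatrix [Fintype W] (e : W ≃ V) (v : V) :
    (Adjv G v).submatrix e e = Adjv (G.comap e) (e.symm v) := by
  ext i j
  simp only [Matrix.submatrix_apply, adjv_apply, SimpleGraph.comap_adj, Equiv.eq_symm_apply]

lemma image_submatrix_adjMon [Fintype W] (e : W ≃ V) :
    (fun A => A.submatrix e e) '' AdjMon G = AdjMon (G.comap e) := by
  rw [AdjMon, GenBy.image_eq (fun A : Matrix V V ℝ => A.submatrix e e)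
    (fun A B => (op_submatrix e A B).symm) rfl, ← Set.range_comp, AdjMon, ← e.symm.surjective.range_comp]
  congr 2
  funext v
  exact adjv_submatrix e v

end

/-- If a Change-of-Order mapping `A ↦ P A Pᵀ` restricts to a monoid
isomorphism from `Adj(G)` onto `Adj(H)`, then `G` and `H` are isomorphic. -/
theorem iso_of_changeOfOrder_adjMon_iso [Fintype V] [DecidableEq V]
    (H : SimpleGraph V) (σ : Equiv.Perm V)
    (h : (fun A => permMat σ * A * (permMat σ)ᵀ) '' AdjMon G = AdjMon H) :
    Nonempty (G ≃g H) := by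
  have hcomap : AdjMon (G.comap σ.symm) = AdjMon H := by
    rw [← image_submatrix_adjMon, ← h]
    simp_rw [permMat_mul_mul_transpose]
  exact ⟨eq_of_adjMon_eq hcomap ▸ (SimpleGraph.Iso.comap σ.symm G).symm⟩

end GGNN
end

section
/- The map Rep from directed subgraphs of G to their reachability matrices is injective, hence a bijection onto its image MatRep(G). -/
namespace GGNN

variable {V : Type*} (G : SimpleGraph V)

/-- `l` is a (direction-respecting) path whose edges all lie in `E`:
it is a nonempty list of directed edges of `E` in which consecutive edges are
composable. -/
def IsPathIn (E : Finset (DEdge G)) (l : List (DEdge G)) : Prop :=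
  l ≠ [] ∧ l.Chain' (fun d e => d.1.2 = e.1.1) ∧ ∀ e ∈ l, e ∈ E

/-- The path `l` starts at the vertex `v`. -/
def startsAt (l : List (DEdge G)) (v : V) : Prop :=
  ∃ e, l.head? = some e ∧ e.1.1 = v

/-- The path `l` ends at the vertex `v`. -/
def endsAt (l : List (DEdge G)) (v : V) : Prop :=
  ∃ e, l.getLast? = some e ∧ e.1.2 = v

/-- A directed subgraph of `G`: a finite set of directed edges of `G` that is
connected (as an undirected subgraph), and acyclic with at most one directed
path between any two nodes. -/
structure DirSub where
  edges : Finset (DEdge G)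
  connected : ∀ v w : V, (∃ e ∈ edges, e.1.1 = v ∨ e.1.2 = v) →
      (∃ e ∈ edges, e.1.1 = w ∨ e.1.2 = w) →
      Relation.ReflTransGen
        (fun a b => ∃ e ∈ edges, (e.1.1 = a ∧ e.1.2 = b) ∨ (e.1.1 = b ∧ e.1.2 = a)) v w
  uniquePath : ∀ (v w : V) (l₁ l₂ : List (DEdge G)),
      IsPathIn G edges l₁ → IsPathIn G edges l₂ →
      startsAt G l₁ v → startsAt G l₂ v → endsAt G l₁ w → endsAt G l₂ w → l₁ = l₂
  acyclic : ∀ (v : V) (l : List (DEdge G)),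
      IsPathIn G edges l → startsAt G l v → ¬ endsAt G l v

/-- `v ≤_D w`: there is a direction-respecting path in `D` from `v` to `w`. -/
def Reaches (D : DirSub G) (v w : V) : Prop :=
  ∃ l, IsPathIn G D.edges l ∧ startsAt G l v ∧ endsAt G l w

open scoped Classical in
/-- The reachability (matrix representation) matrix `Rep(D)` of a directed
subgraph: entry `(v, w)` is `1` if `v ≤_D w` and `0` otherwise. -/
noncomputable def Rep [Fintype V] (D : DirSub G) : Matrix V V ℝ :=
  Matrix.of fun v w => if Reaches G D v w then 1 else 0

/-!
Since a directed subgraph has at most one path between two vertices, a single edge `v → w`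
admits no detour `v → u → w`, while a longer path from `v` to `w` passes through the head
of its first edge. Hence the edges of `D` are exactly the covering pairs of its reachability
relation, and `Rep D` determines the edge set, which in turn determines `D`.
-/

section

variable {G} {E : Finset (DEdge G)}

lemma isPathIn_singleton {e : DEdge G} (he : e ∈ E) : IsPathIn G E [e] :=
  ⟨List.cons_ne_nil _ _, List.isChain_singleton _, by simpa using he⟩

lemma IsPathIn.append {l₁ l₂ : List (DEdge G)} {u : V} (h₁ : IsPathIn G E l₁)
    (h₂ : IsPathIn G E l₂) (hu₁ : endsAt G l₁ u) (hu₂ : startsAt G l₂ u) :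
    IsPathIn G E (l₁ ++ l₂) := by
  obtain ⟨a, ha, rfl⟩ := hu₁
  obtain ⟨b, hb, hab⟩ := hu₂
  refine ⟨by simp [h₁.1], h₁.2.1.append h₂.2.1 ?_, ?_⟩
  · intro x hx y hy
    rw [hx] at ha
    rw [hy] at hb
    cases ha
    cases hb
    exact hab.symm
  · intro e he
    rcases List.mem_append.mp he with h | h
    exacts [h₁.2.2 e h, h₂.2.2 e h]

lemma startsAt_append {l₁ l₂ : List (DEdge G)} {v : V} (h : l₁ ≠ []) :
    startsAt G (l₁ ++ l₂) v ↔ startsAt G l₁ v := by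
  simp only [startsAt, List.head?_append_of_ne_nil _ h]

lemma endsAt_append {l₁ l₂ : List (DEdge G)} {w : V} (h : l₂ ≠ []) :
    endsAt G (l₁ ++ l₂) w ↔ endsAt G l₂ w := by
  simp only [endsAt, List.getLast?_append_of_ne_nil _ h]

lemma IsPathIn.tail {e : DEdge G} {l : List (DEdge G)} (hp : IsPathIn G E (e :: l))
    (hl : l ≠ []) : IsPathIn G E l ∧ startsAt G l e.1.2 := by
  obtain ⟨_, hchain, hmem⟩ := hp
  obtain ⟨e', l', rfl⟩ := List.exists_cons_of_ne_nil hl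
  exact ⟨⟨hl, (List.isChain_cons.mp hchain).2, fun x hx => hmem x (List.mem_cons_of_mem _ hx)⟩,
    e', rfl, ((List.isChain_cons_cons.mp hchain).1).symm⟩

lemma reaches_of_mem_edges {D : DirSub G} {e : DEdge G} (he : e ∈ D.edges) :
    Reaches G D e.1.1 e.1.2 :=
  ⟨[e], isPathIn_singleton he, ⟨e, rfl, rfl⟩, ⟨e, rfl, rfl⟩⟩

lemma not_reaches_of_mem_edges {D : DirSub G} {e : DEdge G} (he : e ∈ D.edges) (u : V)
    (hu : Reaches G D e.1.1 u) : ¬ Reaches G D u e.1.2 := by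
  obtain ⟨l₁, hp₁, hs₁, he₁⟩ := hu
  rintro ⟨l₂, hp₂, hs₂, he₂⟩
  have hpath : l₁ ++ l₂ = [e] :=
    D.uniquePath _ _ _ _ (hp₁.append hp₂ he₁ hs₂) (isPathIn_singleton he)
      ((startsAt_append hp₁.1).2 hs₁) ⟨e, rfl, rfl⟩ ((endsAt_append hp₂.1).2 he₂) ⟨e, rfl, rfl⟩
  have hlen := congrArg List.length hpath
  have := List.length_pos_iff.mpr hp₁.1
  have := List.length_pos_iff.mpr hp₂.1
  simp only [List.length_append, List.length_singleton] at hlen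
  omega

lemma mem_edges_of_reaches {D : DirSub G} {e : DEdge G} (hreach : Reaches G D e.1.1 e.1.2)
    (hcover : ∀ u, Reaches G D e.1.1 u → ¬ Reaches G D u e.1.2) : e ∈ D.edges := by
  obtain ⟨l, hp, hs, he⟩ := hreach
  cases l with
  | nil => exact absurd rfl hp.1
  | cons e₀ rest =>
    obtain ⟨_, ⟨⟩, hs⟩ := hs
    have he₀ : e₀ ∈ D.edges := hp.2.2 e₀ List.mem_cons_self
    rcases eq_or_ne rest [] with rfl | hrest
    · obtain ⟨_, ⟨⟩, ht⟩ := he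
      rwa [← Subtype.ext (Prod.ext hs ht)]
    · obtain ⟨hp_rest, hs_rest⟩ := hp.tail hrest
      refine absurd ⟨rest, hp_rest, hs_rest, (endsAt_append (l₁ := [e₀]) hrest).1 he⟩
        (hcover e₀.1.2 ?_)
      rw [← hs]
      exact reaches_of_mem_edges he₀

lemma mem_edges_iff {D : DirSub G} {e : DEdge G} :
    e ∈ D.edges ↔ Reaches G D e.1.1 e.1.2 ∧
      ∀ u, Reaches G D e.1.1 u → ¬ Reaches G D u e.1.2 :=
  ⟨fun he => ⟨reaches_of_mem_edges he, not_reaches_of_mem_edges he⟩,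
    fun h => mem_edges_of_reaches h.1 h.2⟩

lemma DirSub.edges_injective : Function.Injective (DirSub.edges (G := G)) := by
  rintro ⟨E₁, _, _, _⟩ ⟨E₂, _, _, _⟩ (rfl : E₁ = E₂)
  rfl

lemma DirSub.ext_of_reaches {D₁ D₂ : DirSub G} (h : Reaches G D₁ = Reaches G D₂) : D₁ = D₂ :=
  DirSub.edges_injective <| Finset.ext fun _ => by rw [mem_edges_iff, mem_edges_iff, h]

lemma reaches_eq_of_rep_eq [Fintype V] {D₁ D₂ : DirSub G} (h : Rep G D₁ = Rep G D₂) :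
    Reaches G D₁ = Reaches G D₂ := by
  ext v w
  have hvw := congrFun (congrFun h v) w
  simp only [Rep, Matrix.of_apply] at hvw
  split_ifs at hvw <;> simp_all

end

/-- The map `Rep`, sending a directed subgraph of `G` to its reachability
matrix, is injective; hence it is a bijection onto its image `MatRep(G)`. -/
theorem rep_injective [Fintype V] :
    Function.Injective (Rep G) ∧
    Set.BijOn (Rep G) Set.univ (Set.range (Rep G)) := by
  have hinj : Function.Injective (Rep G) := fun _ _ h =>
    DirSub.ext_of_reaches (reaches_eq_of_rep_eq h)
  exact ⟨hinj, Set.image_univ (f := Rep G) ▸ hinj.injOn.bijOn_image⟩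

end GGNN
end
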